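/- Let d₁, d₂, d₃ be real numbers and let Φ_D : Matrix (Fin 2) (Fin 2) ℂ → Matrix (Fin 2) (Fin 2) ℂ be the unique linear map satisfying Φ_D(σ_0) = σ_0 and Φ_D(σ_j) = d_j • σ_j for j = 1, 2, 3. Then Φ_D is completely positive if and only if 1 − d₃ ≥ |d₁ − d₂| and 1 + d₃ ≥ |d₁ + d₂| (the Algoet–Fujiwara conditions), equivalently, if and only if the four numbers (1 + d₁ + d₂ + d₃)/4, (1 + d₁ − d₂ − d₃)/4, (1 − d₁ + d₂ − d₃)/4, (1 − d₁ − d₂ + d₃)/4 are all nonnegative. -/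

import Mathlib

open scoped ComplexOrder Matrix

/-- The Pauli matrices `σ_0, σ_1, σ_2, σ_3`. -/
def pauli : Fin 4 → Matrix (Fin 2) (Fin 2) ℂ :=
  ![!![1, 0; 0, 1], !![0, 1; 1, 0], !![0, -Complex.I; Complex.I, 0], !![1, 0; 0, -1]]

/-- `Φ` is completely positive: for every `m ≥ 1`, the map `id_m ⊗ Φ` (acting blockwise on
`m × m` block matrices with `N × N` blocks) maps positive semidefinite matrices to positive
semidefinite matrices. -/
def CompletelyPositive {N : ℕ}
    (Φ : Matrix (Fin N) (Fin N) ℂ → Matrix (Fin N) (Fin N) ℂ) : Prop :=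
  ∀ m : ℕ, 1 ≤ m → ∀ M : Matrix (Fin m × Fin N) (Fin m × Fin N) ℂ, M.PosSemidef →
    (Matrix.of fun p q : Fin m × Fin N =>
      Φ (Matrix.of fun a b : Fin N => M (p.1, a) (q.1, b)) p.2 q.2).PosSemidef

/-!
The map Φ_D is the Pauli channel `X ↦ ∑ᵢ pᵢ σᵢ X σᵢ` whose weights `pᵢ` are the four numbers of
the statement: both sides are linear and agree on the Pauli basis, since `σᵢ σⱼ σᵢ = ±σⱼ`.
A map in Kraus form with nonnegative weights is completely positive. Conversely, the Pauli
matrices are orthogonal for the Hilbert–Schmidt inner product, so evaluating the quadratic form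
of the Choi matrix of Φ_D at `vec σⱼ` isolates `pⱼ |tr (σⱼ σⱼ)|² = 4 pⱼ`, which must be `≥ 0`.
The Algoet–Fujiwara inequalities are a linear rearrangement of `pᵢ ≥ 0`.
-/

open Matrix
open scoped Kronecker

section Kraus

variable {N : ℕ} {ι : Type*} [Fintype ι]

def ampliation (m : ℕ) (Φ : Matrix (Fin N) (Fin N) ℂ → Matrix (Fin N) (Fin N) ℂ)
    (M : Matrix (Fin m × Fin N) (Fin m × Fin N) ℂ) : Matrix (Fin m × Fin N) (Fin m × Fin N) ℂ :=
  of fun p q => Φ (of fun a b => M (p.1, a) (q.1, b)) p.2 q.2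

noncomputable def krausMap (w : ι → ℝ) (K : ι → Matrix (Fin N) (Fin N) ℂ) :
    Matrix (Fin N) (Fin N) ℂ →ₗ[ℂ] Matrix (Fin N) (Fin N) ℂ :=
  ∑ i, w i • (LinearMap.mulLeft ℂ (K i)ᴴ ∘ₗ LinearMap.mulRight ℂ (K i))

lemma krausMap_apply (w : ι → ℝ) (K : ι → Matrix (Fin N) (Fin N) ℂ)
    (X : Matrix (Fin N) (Fin N) ℂ) :
    krausMap w K X = ∑ i, w i • ((K i)ᴴ * X * K i) := by
  simp [krausMap, Matrix.mul_assoc]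

lemma ampliation_krausMap (m : ℕ) (w : ι → ℝ) (K : ι → Matrix (Fin N) (Fin N) ℂ)
    (M : Matrix (Fin m × Fin N) (Fin m × Fin N) ℂ) :
    ampliation m (krausMap w K) M = ∑ i, w i • ((1 ⊗ₖ K i)ᴴ * M * (1 ⊗ₖ K i)) := by
  ext p q
  simp [ampliation, krausMap_apply, Matrix.sum_apply, mul_apply, conjTranspose_kronecker, one_apply,
    Fintype.sum_prod_type, ite_mul, mul_ite, Finset.sum_ite_eq, Finset.sum_ite_eq']

theorem completelyPositive_krausMap {w : ι → ℝ} (hw : ∀ i, 0 ≤ w i)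
    (K : ι → Matrix (Fin N) (Fin N) ℂ) : CompletelyPositive (krausMap w K) := by
  intro m _ M hM
  change (ampliation m (krausMap w K) M).PosSemidef
  rw [ampliation_krausMap]
  exact posSemidef_sum _ fun i _ => (hM.conjTranspose_mul_mul_same _).smul (hw i)

/-- `vec 1` is the unnormalised maximally entangled vector `∑ₐ eₐ ⊗ eₐ`. -/
def choiMatrix (Φ : Matrix (Fin N) (Fin N) ℂ → Matrix (Fin N) (Fin N) ℂ) :
    Matrix (Fin N × Fin N) (Fin N × Fin N) ℂ :=
  ampliation N Φ (vecMulVec (vec 1) (star (vec 1)))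

theorem CompletelyPositive.choiMatrix_posSemidef
    {Φ : Matrix (Fin N) (Fin N) ℂ → Matrix (Fin N) (Fin N) ℂ} (hΦ : CompletelyPositive Φ)
    (hN : 1 ≤ N) : (choiMatrix Φ).PosSemidef :=
  hΦ N hN _ (posSemidef_vecMulVec_self_star _)

lemma choiMatrix_krausMap (w : ι → ℝ) (K : ι → Matrix (Fin N) (Fin N) ℂ) :
    choiMatrix (krausMap w K) = ∑ i, w i • vecMulVec (vec (K i)ᴴ) (star (vec (K i)ᴴ)) := by
  ext p q
  simp [choiMatrix, ampliation, krausMap_apply, Matrix.sum_apply, mul_apply, vecMulVec_apply,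
    one_apply, ite_mul, mul_ite, Finset.sum_ite_eq']

lemma star_dotProduct_choiMatrix_krausMap_mulVec (w : ι → ℝ) (K : ι → Matrix (Fin N) (Fin N) ℂ)
    (j : ι) :
    star (vec (K j)ᴴ) ⬝ᵥ (choiMatrix (krausMap w K) *ᵥ vec (K j)ᴴ) =
      ((∑ i, w i * Complex.normSq ((K j)ᴴ * K i).trace : ℝ) : ℂ) := by
  simp only [choiMatrix_krausMap, Matrix.sum_mulVec, dotProduct_sum, smul_mulVec, dotProduct_smul,
    vecMulVec_mulVec, star_vec_dotProduct_vec, conjTranspose_conjTranspose]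
  push_cast
  refine Finset.sum_congr rfl fun i _ => ?_
  rw [Complex.normSq_eq_conj_mul_self, ← Complex.star_def, ← trace_conjTranspose,
    trace_mul_comm (K i), conjTranspose_mul, conjTranspose_conjTranspose, trace_mul_comm (K i)ᴴ]
  simp [Complex.real_smul, mul_comm]

theorem completelyPositive_krausMap_iff {w : ι → ℝ} {K : ι → Matrix (Fin N) (Fin N) ℂ}
    (hK : Pairwise fun i j => ((K i)ᴴ * K j).trace = 0) (hK0 : ∀ i, K i ≠ 0) :
    CompletelyPositive (krausMap w K) ↔ ∀ i, 0 ≤ w i := by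
  refine ⟨fun hcp j => ?_, fun hw => completelyPositive_krausMap hw K⟩
  have hN : 1 ≤ N := by
    by_contra! hN
    obtain rfl : N = 0 := by omega
    exact hK0 j (Subsingleton.elim _ _)
  have hq := (hcp.choiMatrix_posSemidef hN).dotProduct_mulVec_nonneg (vec (K j)ᴴ)
  rw [star_dotProduct_choiMatrix_krausMap_mulVec, Complex.zero_le_real,
    Finset.sum_eq_single j (fun i _ hij => by simp [hK hij.symm]) (by simp)] at hq
  have hpos : 0 < Complex.normSq ((K j)ᴴ * K j).trace :=
    Complex.normSq_pos.2 (trace_conjTranspose_mul_self_eq_zero_iff.not.2 (hK0 j))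
  exact nonneg_of_mul_nonneg_left hq hpos

end Kraus

lemma pauli_conjTranspose (i : Fin 4) : (pauli i)ᴴ = pauli i := by
  fin_cases i <;> ext a b <;> fin_cases a <;> fin_cases b <;> simp [pauli]

lemma trace_pauli_mul_pauli (i j : Fin 4) :
    (pauli i * pauli j).trace = if i = j then 2 else 0 := by
  fin_cases i <;> fin_cases j <;> norm_num [pauli, trace, mul_apply, Fin.sum_univ_two]

lemma pauli_mul_pauli_mul_pauli (i j : Fin 4) :
    pauli i * pauli j * pauli i = (if i = 0 ∨ j = 0 ∨ i = j then 1 else -1 : ℝ) • pauli j := by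
  fin_cases i <;> fin_cases j <;> ext a b <;> fin_cases a <;> fin_cases b <;>
    norm_num [pauli, mul_apply, Fin.sum_univ_two]

lemma span_range_pauli : Submodule.span ℂ (Set.range pauli) = ⊤ := by
  refine Submodule.eq_top_iff'.2 fun X => (Submodule.mem_span_range_iff_exists_fun ℂ).2 ?_
  refine ⟨![(X 0 0 + X 1 1) / 2, (X 0 1 + X 1 0) / 2, Complex.I * (X 0 1 - X 1 0) / 2,
    (X 0 0 - X 1 1) / 2], ?_⟩
  ext a b
  fin_cases a <;> fin_cases b <;> simp [pauli, Fin.sum_univ_four] <;> ring_nf <;>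
    simp [Complex.I_sq] <;> ring

noncomputable def pauliWeights (d₁ d₂ d₃ : ℝ) : Fin 4 → ℝ :=
  ![(1 + d₁ + d₂ + d₃) / 4, (1 + d₁ - d₂ - d₃) / 4, (1 - d₁ + d₂ - d₃) / 4, (1 - d₁ - d₂ + d₃) / 4]

lemma krausMap_pauliWeights_pauli (d₁ d₂ d₃ : ℝ) (j : Fin 4) :
    krausMap (pauliWeights d₁ d₂ d₃) pauli (pauli j) = ![1, d₁, d₂, d₃] j • pauli j := by
  simp only [krausMap_apply, pauli_conjTranspose, pauli_mul_pauli_mul_pauli, smul_smul,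
    ← Finset.sum_smul]
  congr 1
  fin_cases j <;> simp [Fin.sum_univ_four, pauliWeights] <;> ring

theorem stmt_5 (d₁ d₂ d₃ : ℝ)
    (Φ : Matrix (Fin 2) (Fin 2) ℂ →ₗ[ℂ] Matrix (Fin 2) (Fin 2) ℂ)
    (hΦ0 : Φ (pauli 0) = pauli 0)
    (hΦ1 : Φ (pauli 1) = d₁ • pauli 1)
    (hΦ2 : Φ (pauli 2) = d₂ • pauli 2)
    (hΦ3 : Φ (pauli 3) = d₃ • pauli 3) :
    (CompletelyPositive Φ ↔ (|d₁ - d₂| ≤ 1 - d₃ ∧ |d₁ + d₂| ≤ 1 + d₃)) ∧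
    (CompletelyPositive Φ ↔
      (0 ≤ (1 + d₁ + d₂ + d₃) / 4 ∧ 0 ≤ (1 + d₁ - d₂ - d₃) / 4 ∧
       0 ≤ (1 - d₁ + d₂ - d₃) / 4 ∧ 0 ≤ (1 - d₁ - d₂ + d₃) / 4)) := by
  have hΦ : Φ = krausMap (pauliWeights d₁ d₂ d₃) pauli := by
    refine LinearMap.ext_on_range span_range_pauli fun j => ?_
    rw [krausMap_pauliWeights_pauli]
    fin_cases j <;> simp [hΦ0, hΦ1, hΦ2, hΦ3]
  have hcp : CompletelyPositive Φ ↔ ∀ i, 0 ≤ pauliWeights d₁ d₂ d₃ i := by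
    rw [hΦ]
    refine completelyPositive_krausMap_iff (fun i j hij => ?_) fun i hi => ?_
    · simpa [pauli_conjTranspose, trace_pauli_mul_pauli] using hij
    · simpa [hi] using trace_pauli_mul_pauli i i
  have hweights : CompletelyPositive Φ ↔
      (0 ≤ (1 + d₁ + d₂ + d₃) / 4 ∧ 0 ≤ (1 + d₁ - d₂ - d₃) / 4 ∧
       0 ≤ (1 - d₁ + d₂ - d₃) / 4 ∧ 0 ≤ (1 - d₁ - d₂ + d₃) / 4) := by
    simp [hcp, Fin.forall_fin_succ, pauliWeights]
  refine ⟨hweights.trans ?_, hweights⟩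
  rw [abs_le, abs_le]
  constructor
  · rintro ⟨h₀, h₁, h₂, h₃⟩
    exact ⟨⟨by linarith, by linarith⟩, by linarith, by linarith⟩
  · rintro ⟨⟨h₀, h₁⟩, h₂, h₃⟩
    exact ⟨by linarith, by linarith, by linarith, by linarith⟩
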